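/- Suppose max(A, B+2, F) < p̄(q), and assume the relevant three-vertices exist (A + B, A + F parities compatible, admissibility conditions hold). Then the tetrahedral network evaluates as Tet[A, B, 2; B+2, A, F] = (1/[A]) · [(A − B + F)/2] · Θ(A, F, B+2). -/

import Mathlib

/-- The quantum integer `[m]`, with the convention `[m] = m·q^(m-1)` when `q = ±1`. -/
noncomputable def qint (q : ℂ) (m : ℤ) : ℂ :=
  if q ^ 2 = 1 then (m : ℂ) * q ^ (m - 1)
  else (q ^ m - q ^ (-m)) / (q - q⁻¹)

/-- The quantum factorial `[m]! = [1][2]⋯[m]`, with `[0]! = 1`. -/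
noncomputable def qfact (q : ℂ) : ℕ → ℂ
  | 0 => 1
  | n + 1 => qfact q n * qint q ((n : ℤ) + 1)

open scoped Classical in
/-- `p̄(q)`: the least `p > 0` with `q^(2p) = 1` if `q` is a root of unity other than `±1`,
and `∞` otherwise. -/
noncomputable def pbar (q : ℂ) : ℕ∞ :=
  if q = 1 ∨ q = -1 then ⊤
  else if ∃ p : ℕ, 0 < p ∧ q ^ (2 * p) = 1 then
    ((sInf {p : ℕ | 0 < p ∧ q ^ (2 * p) = 1} : ℕ) : ℕ∞)
  else ⊤

/-- The closed-form evaluation of the Theta network `Θ(r,s,t)`. -/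
noncomputable def thetaFormula (q : ℂ) (r s t : ℕ) : ℂ :=
  (-1 : ℂ) ^ ((r + s + t) / 2) * qfact q ((r + s + t) / 2 + 1) *
      qfact q ((r + s - t) / 2) * qfact q ((s + t - r) / 2) * qfact q ((t + r - s) / 2) /
    (qfact q r * qfact q s * qfact q t)

/-- The evaluation of the tetrahedral network `Tet[A B E; C D F]` of
Temperley-Lieb recoupling theory (Kauffman-Lins), whose vertices carry the triples
`(A,D,E)`, `(B,C,E)`, `(A,B,F)`, `(C,D,F)`, given by the standard closed formula. -/
noncomputable def tetFormula (q : ℂ) (A B E C D F : ℕ) : ℂ :=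
  let a1 := (A + D + E) / 2
  let a2 := (B + C + E) / 2
  let a3 := (A + B + F) / 2
  let a4 := (C + D + F) / 2
  let b1 := (B + D + E + F) / 2
  let b2 := (A + C + E + F) / 2
  let b3 := (A + B + C + D) / 2
  (qfact q (b1 - a1) * qfact q (b1 - a2) * qfact q (b1 - a3) * qfact q (b1 - a4) *
        qfact q (b2 - a1) * qfact q (b2 - a2) * qfact q (b2 - a3) * qfact q (b2 - a4) *
        qfact q (b3 - a1) * qfact q (b3 - a2) * qfact q (b3 - a3) * qfact q (b3 - a4)) /
      (qfact q A * qfact q B * qfact q E * qfact q C * qfact q D * qfact q F) *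
    ∑ z ∈ Finset.Icc (max (max a1 a2) (max a3 a4)) (min (min b1 b2) b3),
      ((-1 : ℂ) ^ z * qfact q (z + 1)) /
        (qfact q (z - a1) * qfact q (z - a2) * qfact q (z - a3) * qfact q (z - a4) *
          qfact q (b1 - z) * qfact q (b2 - z) * qfact q (b3 - z))

/-! With `E = 2` the summation range `[max aᵢ, min bⱼ]` of the tetrahedral formula is empty when
`A + F < B + 2` (and then `[(A + F - B)/2] = [0] = 0`), and otherwise the single point
`(A + B + F)/2 + 1`. Writing `A = b + c + 1`, `B = a + c`, `F = a + b + 1`, so that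
`(A, F, B + 2) = (y + z, x + z, x + y)` with `(x, y, z) = (a + 1, c + 1, b)`, and comparing the single
term with `Θ(A, F, B + 2)`, every quantum factorial cancels except `[b + 1]!/[b]! = [b + 1]` and
`[A - 1]!/[A]! = 1/[A]`. The bound `max(A, B + 2, F) < p̄(q)` keeps all these factorials nonzero. -/

lemma qint_zero (q : ℂ) : qint q 0 = 0 := by
  unfold qint; split_ifs <;> simp

lemma sub_inv_ne_zero {q : ℂ} (hq : q ≠ 0) (h : q ^ 2 ≠ 1) : q - q⁻¹ ≠ 0 := by
  rwa [sub_ne_zero, Ne, ← mul_eq_one_iff_eq_inv₀ hq, ← sq]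

lemma qint_one {q : ℂ} (hq : q ≠ 0) : qint q 1 = 1 := by
  unfold qint
  split_ifs with h
  · simp
  · simpa using div_self (sub_inv_ne_zero hq h)

lemma pow_two_mul_ne_one_of_lt_pbar {q : ℂ} (h : q ^ 2 ≠ 1) {k : ℕ} (hk : 0 < k)
    (hkp : (k : ℕ∞) < pbar q) : q ^ (2 * k) ≠ 1 := by
  intro hqk
  have hq : ¬(q = 1 ∨ q = -1) := by rintro (rfl | rfl) <;> norm_num at h
  rw [pbar, if_neg hq, if_pos ⟨k, hk, hqk⟩, Nat.cast_lt] at hkp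
  exact hkp.not_ge (Nat.sInf_le ⟨hk, hqk⟩)

lemma qint_natCast_ne_zero {q : ℂ} (hq : q ≠ 0) {k : ℕ} (hk : 0 < k)
    (hkp : (k : ℕ∞) < pbar q) : qint q k ≠ 0 := by
  unfold qint
  split_ifs with h
  · exact mul_ne_zero (by exact_mod_cast hk.ne') (zpow_ne_zero _ hq)
  · refine div_ne_zero (sub_ne_zero.mpr fun hqk => pow_two_mul_ne_one_of_lt_pbar h hk hkp ?_)
      (sub_inv_ne_zero hq h)
    rw [two_mul, pow_add, ← zpow_natCast]
    nth_rw 1 [hqk]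
    rw [← zpow_add₀ hq, neg_add_cancel, zpow_zero]

lemma qfact_zero (q : ℂ) : qfact q 0 = 1 := rfl

lemma qfact_succ (q : ℂ) (n : ℕ) : qfact q (n + 1) = qfact q n * qint q ((n + 1 : ℕ) : ℤ) := by
  rw [qfact, Nat.cast_succ]

lemma qfact_one {q : ℂ} (hq : q ≠ 0) : qfact q 1 = 1 := by
  rw [qfact_succ, qfact_zero, Nat.cast_one, qint_one hq, one_mul]

lemma qfact_ne_zero {q : ℂ} (hq : q ≠ 0) {k : ℕ} (hkp : (k : ℕ∞) < pbar q) :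
    qfact q k ≠ 0 := by
  induction k with
  | zero => exact one_ne_zero
  | succ n ih =>
    rw [qfact_succ]
    exact mul_ne_zero (ih (lt_of_le_of_lt (by norm_cast; omega) hkp))
      (qint_natCast_ne_zero hq n.succ_pos hkp)

lemma thetaFormula_eq {q : ℂ} {r s t : ℕ} (a b c : ℕ) (hr : r = b + c) (hs : s = a + c)
    (ht : t = a + b) :
    thetaFormula q r s t =
      (-1) ^ (a + b + c) * qfact q (a + b + c + 1) * qfact q c * qfact q a * qfact q b /
        (qfact q r * qfact q s * qfact q t) := by
  subst hr hs ht
  have hsum : (b + c + (a + c) + (a + b)) / 2 = a + b + c := by omega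
  have hc : (b + c + (a + c) - (a + b)) / 2 = c := by omega
  have ha : (a + c + (a + b) - (b + c)) / 2 = a := by omega
  have hb : (a + b + (b + c) - (a + c)) / 2 = b := by omega
  rw [thetaFormula, hsum, hc, ha, hb]

lemma tetFormula_two_eq_single_term (q : ℂ) (a b c : ℕ) :
    tetFormula q (b + c + 1) (a + c) 2 (a + c + 2) (b + c + 1) (a + b + 1) =
      qfact q a * qfact q b * qfact q 1 * qfact q 0 *
          qfact q (a + 1) * qfact q (b + 1) * qfact q 2 * qfact q 1 *
          qfact q (a + c) * qfact q (b + c) * qfact q (c + 1) * qfact q c /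
        (qfact q (b + c + 1) * qfact q (a + c) * qfact q 2 * qfact q (a + c + 2) *
          qfact q (b + c + 1) * qfact q (a + b + 1)) *
      ((-1) ^ (a + b + c + 2) * qfact q (a + b + c + 3) /
        (qfact q a * qfact q b * qfact q 1 * qfact q 0 *
          qfact q 0 * qfact q 1 * qfact q c)) := by
  simp only [tetFormula]
  rw [Finset.sum_eq_single (a + b + c + 2) (fun z hz _ => by simp only [Finset.mem_Icc] at hz; omega)
    (fun h => by simp only [Finset.mem_Icc] at h; omega)]
  -- `sameFun` stops `congr!` at the `qfact` arguments instead of matching `x - y` against `a + 1`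
  congr! +sameFun <;> omega

lemma tetFormula_two_eq_zero (q : ℂ) {A B F : ℕ} (h : A + F < B + 2) :
    tetFormula q A B 2 (B + 2) A F = 0 := by
  simp only [tetFormula]
  rw [Finset.sum_eq_zero fun z hz => absurd (Finset.mem_Icc.mp hz) (by omega), mul_zero]

lemma tetFormula_two_eq_theta {q : ℂ} (hq : q ≠ 0) (a b c : ℕ)
    (hp : ((max (b + c + 1) (max (a + c + 2) (a + b + 1)) : ℕ) : ℕ∞) < pbar q) :
    tetFormula q (b + c + 1) (a + c) 2 (a + c + 2) (b + c + 1) (a + b + 1) =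
      1 / qint q ((b + c + 1 : ℕ) : ℤ) * qint q ((b + 1 : ℕ) : ℤ) *
        thetaFormula q (b + c + 1) (a + b + 1) (a + c + 2) := by
  have hfact : ∀ k ≤ max (b + c + 1) (max (a + c + 2) (a + b + 1)), qfact q k ≠ 0 :=
    fun k hk => qfact_ne_zero hq ((Nat.cast_le.mpr hk).trans_lt hp)
  have hA : qint q ((b + c + 1 : ℕ) : ℤ) ≠ 0 :=
    qint_natCast_ne_zero hq (by omega) ((Nat.cast_le.mpr (le_max_left _ _)).trans_lt hp)
  rw [tetFormula_two_eq_single_term, thetaFormula_eq (a + 1) (c + 1) b (by ring) (by ring) (by ring),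
    qfact_succ q b, qfact_succ q (b + c), qfact_one hq, qfact_zero]
  have := hfact a (by omega)
  have := hfact b (by omega)
  have := hfact c (by omega)
  have := hfact (a + c) (by omega)
  have := hfact (b + c) (by omega)
  have := hfact 2 (by omega)
  have := hfact (a + c + 2) (by omega)
  have := hfact (a + b + 1) (by omega)
  field_simp
  ring_nf

theorem tetrahedral_special_evaluation_general (A B F : ℕ) (q : ℂ) (hq : q ≠ 0)
    (hp : ((max A (max (B + 2) F) : ℕ) : ℕ∞) < pbar q)
    (hpar : (A + B + F) % 2 = 0)
    (h1 : F ≤ A + B) (h2 : A ≤ B + F) :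
    tetFormula q A B 2 (B + 2) A F =
      1 / qint q (A : ℤ) * qint q (((A + F - B) / 2 : ℕ) : ℤ) *
        thetaFormula q A F (B + 2) := by
  rcases lt_or_ge (A + F) (B + 2) with hlt | hge
  · rw [tetFormula_two_eq_zero q hlt, show (A + F - B) / 2 = 0 by omega, Nat.cast_zero,
      qint_zero, mul_zero, zero_mul]
  · obtain ⟨a, b, c, rfl, rfl, rfl⟩ : ∃ a b c, A = b + c + 1 ∧ B = a + c ∧ F = a + b + 1 :=
      ⟨(B + F - A) / 2, (A + F - B) / 2 - 1, (A + B - F) / 2, by omega, by omega, by omega⟩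
    rw [tetFormula_two_eq_theta hq a b c hp,
      show (b + c + 1 + (a + b + 1) - (a + c)) / 2 = b + 1 by omega]

/-- for `max(A, B+2, F) < p̄(q)`, assuming the relevant three-vertices
exist (compatible parities and admissibility), the tetrahedral network evaluates as
`Tet[A, B, 2; B+2, A, F] = (1/[A])·[(A-B+F)/2]·Θ(A, F, B+2)`. -/
theorem tetrahedral_special_evaluation (A B F : ℕ) (q : ℂ) (hq : q ≠ 0)
    (hp : ((max A (max (B + 2) F) : ℕ) : ℕ∞) < pbar q)
    (hA : 1 ≤ A) (hpar : (A + B + F) % 2 = 0)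
    (h1 : F ≤ A + B) (h2 : A ≤ B + F) (h3 : B ≤ A + F) :
    tetFormula q A B 2 (B + 2) A F =
      1 / qint q (A : ℤ) * qint q (((A + F - B) / 2 : ℕ) : ℤ) *
        thetaFormula q A F (B + 2) :=
  tetrahedral_special_evaluation_general A B F q hq hp hpar h1 h2
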